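/- Let V be a cartesian monoidal category (monoidal structure given by finite products) with finite limits and small coproducts that are universal and disjoint, and let M be a V-enriched category whose type of objects is a set (small). Consider the three morphisms π₁, π₂, comp : ∐_{(a,b,c)∈M₀³} M(b,c) × M(a,b) → ∐_{(a,b)∈M₀²} M(a,b), where on the (a,b,c)-component: π₁ is the first projection followed by the coprojection indexed by (b,c); π₂ is the second projection followed by the coprojection indexed by (a,b); and comp is the enriched composition M(b,c) × M(a,b) → M(a,c) followed by the coprojection indexed by (a,c). Let E with ε : E → ∐_{(a,b,c)} M(b,c) × M(a,b) be the joint equalizer of π₁, π₂ and comp. Then for all objects a ≠ b of M, the pullback of the coprojection M(a,b) → ∐_{(a',b')} M(a',b') along the composite π₂ ∘ ε : E → ∐_{(a',b')} M(a',b') is the initial object 0 of V. -/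
import Mathlib


open CategoryTheory CategoryTheory.Limits

universe v u

variable (V : Type u) [Category.{v} V] [HasFiniteLimits V] [HasCoproducts.{v} V]

/-- Coproducts are universal: the coproduct of the pullbacks of the coprojections
along any morphism `f : Y ⟶ ∐ x` maps isomorphically onto `Y`. -/
def UniversalCoproducts : Prop :=
  ∀ ⦃I : Type v⦄ (x : I → V) (Y : V) (f : Y ⟶ ∐ x)
    (y : I → V) (p : ∀ i, y i ⟶ Y) (q : ∀ i, y i ⟶ x i),
    (∀ i, IsPullback (q i) (p i) (Sigma.ι x i) f) → IsIso (Sigma.desc p)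

/-- Coproducts are disjoint: the pullback of two distinct coprojections is the
initial object. -/
def DisjointCoproducts [HasInitial V] : Prop :=
  ∀ ⦃I : Type v⦄ (x : I → V) (i j : I), i ≠ j →
    IsPullback (initial.to (x i)) (initial.to (x j)) (Sigma.ι x i) (Sigma.ι x j)

/-- A category enriched over the cartesian monoidal structure of `V` (the
monoidal structure given by finite products), with a small type of objects. -/
structure EnrichedCat where
  Obj : Type v
  Hom : Obj → Obj → V
  eId : ∀ a, (⊤_ V) ⟶ Hom a a
  comp : ∀ a b c, Hom b c ⨯ Hom a b ⟶ Hom a c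
  id_comp : ∀ a b,
    (prod.leftUnitor (Hom a b)).inv ≫ Limits.prod.map (eId b) (𝟙 (Hom a b)) ≫
      comp a b b = 𝟙 (Hom a b)
  comp_id : ∀ a b,
    (prod.rightUnitor (Hom a b)).inv ≫ Limits.prod.map (𝟙 (Hom a b)) (eId a) ≫
      comp a a b = 𝟙 (Hom a b)
  assoc : ∀ a b c d,
    Limits.prod.map (comp b c d) (𝟙 (Hom a b)) ≫ comp a b d =
      (prod.associator (Hom c d) (Hom b c) (Hom a b)).hom ≫
        Limits.prod.map (𝟙 (Hom c d)) (comp a b c) ≫ comp a c d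

variable {V}

/-- The morphism `π₁ : ∐_{(a,b,c)} M(b,c) ⨯ M(a,b) ⟶ ∐_{(a,b)} M(a,b)` which on
the `(a,b,c)`-component is the first projection followed by the coprojection
indexed by `(b,c)`. -/
noncomputable def pi1 (M : EnrichedCat V) :
    (∐ fun p : M.Obj × M.Obj × M.Obj => M.Hom p.2.1 p.2.2 ⨯ M.Hom p.1 p.2.1) ⟶
      ∐ fun q : M.Obj × M.Obj => M.Hom q.1 q.2 :=
  Sigma.desc fun p => Limits.prod.fst ≫
    Sigma.ι (fun q : M.Obj × M.Obj => M.Hom q.1 q.2) (p.2.1, p.2.2)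

/-- The morphism `π₂ : ∐_{(a,b,c)} M(b,c) ⨯ M(a,b) ⟶ ∐_{(a,b)} M(a,b)` which on
the `(a,b,c)`-component is the second projection followed by the coprojection
indexed by `(a,b)`. -/
noncomputable def pi2 (M : EnrichedCat V) :
    (∐ fun p : M.Obj × M.Obj × M.Obj => M.Hom p.2.1 p.2.2 ⨯ M.Hom p.1 p.2.1) ⟶
      ∐ fun q : M.Obj × M.Obj => M.Hom q.1 q.2 :=
  Sigma.desc fun p => Limits.prod.snd ≫
    Sigma.ι (fun q : M.Obj × M.Obj => M.Hom q.1 q.2) (p.1, p.2.1)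

/-- The morphism `comp : ∐_{(a,b,c)} M(b,c) ⨯ M(a,b) ⟶ ∐_{(a,b)} M(a,b)` which
on the `(a,b,c)`-component is the enriched composition followed by the
coprojection indexed by `(a,c)`. -/
noncomputable def ecmp (M : EnrichedCat V) :
    (∐ fun p : M.Obj × M.Obj × M.Obj => M.Hom p.2.1 p.2.2 ⨯ M.Hom p.1 p.2.1) ⟶
      ∐ fun q : M.Obj × M.Obj => M.Hom q.1 q.2 :=
  Sigma.desc fun p => M.comp p.1 p.2.1 p.2.2 ≫
    Sigma.ι (fun q : M.Obj × M.Obj => M.Hom q.1 q.2) (p.1, p.2.2)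

variable (V)

/-- `ε : E ⟶ X` is a joint equalizer of the three parallel morphisms
`f, g, h : X ⟶ Y`: it equalizes them and is universal among morphisms doing so. -/
def IsJointEqualizer {E X Y : V} (f g h : X ⟶ Y) (ε : E ⟶ X) : Prop :=
  ε ≫ f = ε ≫ g ∧ ε ≫ f = ε ≫ h ∧
    ∀ ⦃Z : V⦄ (k : Z ⟶ X), k ≫ f = k ≫ g → k ≫ f = k ≫ h →
      ∃! l : Z ⟶ E, l ≫ ε = k

/-- The coproduct over the empty type is initial. -/
noncomputable def sigmaEmptyIsInitial :
    IsInitial (∐ (fun e : PEmpty.{v+1} => (PEmpty.elim e : V))) :=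
  IsInitial.ofUniqueHom (fun _ => Sigma.desc (fun e => e.elim))
    (fun _ m => Sigma.hom_ext _ _ (fun e => e.elim))

/-- Strictness of the initial object, derived from universality of coproducts. -/
lemma isInitial_of_to_initial (huniv : UniversalCoproducts V) {P Z : V}
    (hZ : IsInitial Z) (f : P ⟶ Z) : Nonempty (IsInitial P) := by
  set x : PEmpty.{v+1} → V := fun e => e.elim with hx
  have h := huniv x P (f ≫ hZ.to (∐ x)) x (fun e => e.elim) (fun e => e.elim)
    (fun e => e.elim)
  exact ⟨(sigmaEmptyIsInitial V).ofIso (asIso (Sigma.desc (fun e => e.elim)))⟩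

/-- for distinct objects `a ≠ b` of `M`, the pullback of the
coprojection `M(a,b) ⟶ ∐_{(a',b')} M(a',b')` along `ε ≫ π₂` (the composite of
the joint equalizer `ε` of `π₁`, `π₂`, `comp` with `π₂`) is the initial object. -/
theorem pullback_of_coprojection_along_jointEqualizer_isInitial
    [HasInitial V]
    (huniv : UniversalCoproducts V) (hdisj : DisjointCoproducts V)
    (M : EnrichedCat V) (E : V)
    (ε : E ⟶ ∐ fun p : M.Obj × M.Obj × M.Obj => M.Hom p.2.1 p.2.2 ⨯ M.Hom p.1 p.2.1)
    (hE : IsJointEqualizer V (pi1 M) (pi2 M) (ecmp M) ε)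
    (a b : M.Obj) (hab : a ≠ b) :
    Nonempty (IsInitial
      (pullback (Sigma.ι (fun q : M.Obj × M.Obj => M.Hom q.1 q.2) (a, b))
        (ε ≫ pi2 M))) := by
  obtain ⟨-, hpe, -⟩ := hE
  let pairs : M.Obj × M.Obj → V := fun q => M.Hom q.1 q.2
  let triples : M.Obj × M.Obj × M.Obj → V :=
    fun p => M.Hom p.2.1 p.2.2 ⨯ M.Hom p.1 p.2.1
  show Nonempty (IsInitial (pullback (Sigma.ι pairs (a, b)) (ε ≫ pi2 M)))
  set P := pullback (Sigma.ι pairs (a, b)) (ε ≫ pi2 M) with hP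
  set g : P ⟶ ∐ triples :=
    pullback.snd (Sigma.ι pairs (a, b)) (ε ≫ pi2 M) ≫ ε with hg
  set y : M.Obj × M.Obj × M.Obj → V :=
    fun t => pullback (Sigma.ι triples t) g with hy
  have hiso : IsIso (Sigma.desc (fun t => pullback.snd (Sigma.ι triples t) g) :
      ∐ y ⟶ P) :=
    huniv triples P g y (fun t => pullback.snd (Sigma.ι triples t) g)
      (fun t => pullback.fst (Sigma.ι triples t) g)
      (fun t => IsPullback.of_hasPullback _ _)
  have phi : ∀ t, y t ⟶ ⊥_ V := by
    intro t
    have hcomm : pullback.fst (Sigma.ι triples t) g ≫ Sigma.ι triples t =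
        pullback.snd (Sigma.ι triples t) g ≫ g := pullback.condition
    by_cases hxy : t.1 = t.2.1
    · have hne : ((a, b) : M.Obj × M.Obj) ≠ (t.1, t.2.1) := by
        intro h
        rw [Prod.ext_iff] at h
        exact hab (h.1.trans (hxy.trans h.2.symm))
      refine (hdisj pairs (a, b) (t.1, t.2.1) hne).lift
        (pullback.snd (Sigma.ι triples t) g ≫
          pullback.fst (Sigma.ι pairs (a, b)) (ε ≫ pi2 M))
        (pullback.fst (Sigma.ι triples t) g ≫ Limits.prod.snd) ?_
      calc (pullback.snd (Sigma.ι triples t) g ≫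
              pullback.fst (Sigma.ι pairs (a, b)) (ε ≫ pi2 M)) ≫
                Sigma.ι pairs (a, b)
          = pullback.snd (Sigma.ι triples t) g ≫
              pullback.snd (Sigma.ι pairs (a, b)) (ε ≫ pi2 M) ≫ (ε ≫ pi2 M) := by
            rw [Category.assoc, pullback.condition]
        _ = (pullback.snd (Sigma.ι triples t) g ≫ g) ≫ pi2 M := by
            simp [hg]
        _ = pullback.fst (Sigma.ι triples t) g ≫ Sigma.ι triples t ≫ pi2 M := by
            rw [← hcomm, Category.assoc]
        _ = (pullback.fst (Sigma.ι triples t) g ≫ Limits.prod.snd) ≫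
              Sigma.ι pairs (t.1, t.2.1) := by
            simp [pi2, pairs, triples]
    · have hne : ((t.2.1, t.2.2) : M.Obj × M.Obj) ≠ (t.1, t.2.2) := by
        intro h
        rw [Prod.ext_iff] at h
        exact hxy h.1.symm
      refine (hdisj pairs (t.2.1, t.2.2) (t.1, t.2.2) hne).lift
        (pullback.fst (Sigma.ι triples t) g ≫ Limits.prod.fst)
        (pullback.fst (Sigma.ι triples t) g ≫ M.comp t.1 t.2.1 t.2.2) ?_
      calc (pullback.fst (Sigma.ι triples t) g ≫ Limits.prod.fst) ≫
              Sigma.ι pairs (t.2.1, t.2.2)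
          = pullback.fst (Sigma.ι triples t) g ≫ Sigma.ι triples t ≫ pi1 M := by
            simp [pi1, pairs, triples]
        _ = (pullback.snd (Sigma.ι triples t) g ≫
              pullback.snd (Sigma.ι pairs (a, b)) (ε ≫ pi2 M)) ≫ ε ≫ pi1 M := by
            rw [← Category.assoc, hcomm]; simp [hg]
        _ = (pullback.snd (Sigma.ι triples t) g ≫
              pullback.snd (Sigma.ι pairs (a, b)) (ε ≫ pi2 M)) ≫ ε ≫ ecmp M := by
            rw [hpe]
        _ = pullback.fst (Sigma.ι triples t) g ≫ Sigma.ι triples t ≫ ecmp M := by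
            rw [← Category.assoc (pullback.fst (Sigma.ι triples t) g), hcomm]
            simp [hg]
        _ = (pullback.fst (Sigma.ι triples t) g ≫ M.comp t.1 t.2.1 t.2.2) ≫
              Sigma.ι pairs (t.1, t.2.2) := by
            simp [ecmp, pairs, triples]
  exact isInitial_of_to_initial V huniv initialIsInitial
    (inv (Sigma.desc (fun t => pullback.snd (Sigma.ι triples t) g) : ∐ y ⟶ P) ≫
      Sigma.desc phi)
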